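/- If B is a symmetric nonnegative n×n matrix, then the quadratic form x^T B x is a positive hyperbolic polynomial if and only if B has exactly one positive eigenvalue (and x^T B x is positive on the positive orthant). -/

import Mathlib

/-!
In an orthonormal eigenbasis of `B` the form is `q(c) = ∑ λᵢ cᵢ²`, with polar form `b`. For
`q(u) > 0` the polynomial `t ↦ q(x + t u)` has two real roots iff its discriminant
`4 (b(x,u)² - q(x) q(u))` is nonnegative, so hyperbolicity in direction `u` is the reverse
Cauchy–Schwarz inequality `q(x) q(u) ≤ b(x,u)²` for all `x`. This holds iff exactly one `λᵢ` is
positive: if `λᵢ, λⱼ > 0` with `i ≠ j`, a vector of `span {eᵢ, eⱼ}` that is `b`-orthogonal to `u`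
violates it; if only `λᵢ₀ > 0`, the line `x + t u` meets the hyperplane `cᵢ₀ = 0`, where `q ≤ 0`,
so the quadratic `t ↦ q(x + t u)` takes a nonpositive value.
-/

open Polynomial Matrix

/-- The quadratic form of `B`. -/
noncomputable def quadForm {n : ℕ} (B : Matrix (Fin n) (Fin n) ℝ) (x : Fin n → ℝ) : ℝ :=
  dotProduct x (B.mulVec x)

/-- The univariate polynomial `t ↦ (x + t u)ᵀ B (x + t u)` (for symmetric `B`). -/
noncomputable def lineQuad {n : ℕ} (B : Matrix (Fin n) (Fin n) ℝ) (x u : Fin n → ℝ) :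
    Polynomial ℝ :=
  Polynomial.C (dotProduct x (B.mulVec x)) +
    Polynomial.C (2 * dotProduct x (B.mulVec u)) * Polynomial.X +
    Polynomial.C (dotProduct u (B.mulVec u)) * Polynomial.X ^ 2

theorem card_roots_quadratic_eq_two_iff {a b c : ℝ} (ha : a ≠ 0) :
    (C a * X ^ 2 + C b * X + C c).roots.card = 2 ↔ 0 ≤ discrim a b c := by
  constructor
  · intro h
    obtain ⟨r, hr⟩ := Multiset.card_pos_iff_exists_mem.mp (h ▸ two_pos)
    have hr : a * (r * r) + b * r + c = 0 := by
      simpa [sq, mul_assoc] using (mem_roots'.mp hr).2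
    rw [discrim_eq_sq_of_quadratic_eq_zero hr]
    positivity
  · intro h
    set s := √(discrim a b c)
    have hs : discrim a b c = s * s := (Real.mul_self_sqrt h).symm
    have hroots : (C a * X ^ 2 + C b * X + C c).roots =
        {(-b + s) / (2 * a), (-b - s) / (2 * a)} := by
      rw [roots_quadratic_eq_pair_iff_of_ne_zero ha]
      constructor
      · field_simp; ring
      · field_simp; rw [discrim] at hs; linear_combination -hs
    simp [hroots]

theorem card_roots_lineQuad_eq_two_iff {n : ℕ} {B : Matrix (Fin n) (Fin n) ℝ} {u : Fin n → ℝ}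
    (hu : 0 < quadForm B u) (x : Fin n → ℝ) :
    (lineQuad B x u).roots.card = 2 ↔ quadForm B x * quadForm B u ≤ (x ⬝ᵥ B *ᵥ u) ^ 2 := by
  have h : lineQuad B x u
      = C (quadForm B u) * X ^ 2 + C (2 * (x ⬝ᵥ B *ᵥ u)) * X + C (quadForm B x) := by
    rw [lineQuad, quadForm, quadForm]; ring
  rw [h, card_roots_quadratic_eq_two_iff hu.ne', discrim]
  constructor <;> intro h <;> linarith

namespace Matrix

variable {ι : Type*} [Fintype ι] [DecidableEq ι] {w : ι → ℝ}

theorem dotProduct_diagonal_mulVec (c d : ι → ℝ) :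
    c ⬝ᵥ diagonal w *ᵥ d = ∑ i, w i * (c i * d i) := by
  simp only [dotProduct, mulVec_diagonal]
  exact Finset.sum_congr rfl fun i _ => by ring

theorem exists_pos_of_dotProduct_diagonal_mulVec_self_pos {d : ι → ℝ}
    (hd : 0 < d ⬝ᵥ diagonal w *ᵥ d) : ∃ i, 0 < w i := by
  by_contra! hw
  rw [dotProduct_diagonal_mulVec] at hd
  exact hd.not_ge <| Finset.sum_nonpos fun i _ =>
    mul_nonpos_of_nonpos_of_nonneg (hw i) (mul_self_nonneg _)

theorem eq_of_pos_of_reverse_cauchySchwarz {d : ι → ℝ} (hd : 0 < d ⬝ᵥ diagonal w *ᵥ d)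
    (hCS : ∀ c, (c ⬝ᵥ diagonal w *ᵥ c) * (d ⬝ᵥ diagonal w *ᵥ d) ≤ (c ⬝ᵥ diagonal w *ᵥ d) ^ 2)
    {i j : ι} (hi : 0 < w i) (hj : 0 < w j) : i = j := by
  by_contra hij
  obtain ⟨α, β, hαβ, horth⟩ :
      ∃ α β : ℝ, (α ≠ 0 ∨ β ≠ 0) ∧ w i * d i * α + w j * d j * β = 0 := by
    by_cases h : w j * d j = 0
    · exact ⟨0, 1, Or.inr one_ne_zero, by simp [h]⟩
    · exact ⟨w j * d j, -(w i * d i), Or.inl h, by ring⟩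
  set c : ι → ℝ := Pi.single i α + Pi.single j β
  have hci : c i = α := by simp [c, hij]
  have hcj : c j = β := by simp [c, Ne.symm hij]
  have hpair (f : ι → ℝ) : c ⬝ᵥ diagonal w *ᵥ f = w i * (α * f i) + w j * (β * f j) := by
    rw [dotProduct_diagonal_mulVec, Fintype.sum_eq_add i j hij fun k hk => by simp [c, hk.1, hk.2],
      hci, hcj]
  have hcd : c ⬝ᵥ diagonal w *ᵥ d = 0 := by
    rw [hpair]; linear_combination horth
  have hcc : 0 < c ⬝ᵥ diagonal w *ᵥ c := by
    rw [hpair, hci, hcj]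
    rcases hαβ with hα | hβ
    · nlinarith [mul_pos hi (mul_self_pos.2 hα), mul_nonneg hj.le (mul_self_nonneg β)]
    · nlinarith [mul_pos hj (mul_self_pos.2 hβ), mul_nonneg hi.le (mul_self_nonneg α)]
  have := hCS c
  rw [hcd] at this
  nlinarith

theorem dotProduct_diagonal_mulVec_self_nonpos {i₀ : ι} (hw : ∀ i, 0 < w i → i = i₀)
    {x : ι → ℝ} (hx : x i₀ = 0) : x ⬝ᵥ diagonal w *ᵥ x ≤ 0 := by
  rw [dotProduct_diagonal_mulVec]
  refine Finset.sum_nonpos fun i _ => ?_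
  by_cases hi : i = i₀
  · simp [hi, hx]
  · exact mul_nonpos_of_nonpos_of_nonneg (not_lt.1 (mt (hw i) hi)) (mul_self_nonneg _)

theorem dotProduct_diagonal_mulVec_add_smul_self (c d : ι → ℝ) (t : ℝ) :
    (c + t • d) ⬝ᵥ diagonal w *ᵥ (c + t • d) =
      c ⬝ᵥ diagonal w *ᵥ c + 2 * t * (c ⬝ᵥ diagonal w *ᵥ d) +
        t ^ 2 * (d ⬝ᵥ diagonal w *ᵥ d) := by
  simp only [dotProduct_diagonal_mulVec, Finset.mul_sum, ← Finset.sum_add_distrib]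
  exact Finset.sum_congr rfl fun k _ => by
    simp only [Pi.add_apply, Pi.smul_apply, smul_eq_mul]; ring

theorem reverse_cauchySchwarz_of_pos_imp_eq {d : ι → ℝ} (hd : 0 < d ⬝ᵥ diagonal w *ᵥ d)
    {i₀ : ι} (hw : ∀ i, 0 < w i → i = i₀) (c : ι → ℝ) :
    (c ⬝ᵥ diagonal w *ᵥ c) * (d ⬝ᵥ diagonal w *ᵥ d) ≤ (c ⬝ᵥ diagonal w *ᵥ d) ^ 2 := by
  have hdi : d i₀ ≠ 0 := fun h => hd.not_ge (dotProduct_diagonal_mulVec_self_nonpos hw h)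
  have hline := dotProduct_diagonal_mulVec_self_nonpos hw (x := c + (-c i₀ / d i₀) • d)
    (by simp only [Pi.add_apply, Pi.smul_apply, smul_eq_mul]; field_simp; ring)
  rw [dotProduct_diagonal_mulVec_add_smul_self] at hline
  nlinarith [sq_nonneg ((d ⬝ᵥ diagonal w *ᵥ d) * (-c i₀ / d i₀) + c ⬝ᵥ diagonal w *ᵥ d)]

theorem reverse_cauchySchwarz_iff_card_pos_eq_one {d : ι → ℝ} (hd : 0 < d ⬝ᵥ diagonal w *ᵥ d) :
    (∀ c, (c ⬝ᵥ diagonal w *ᵥ c) * (d ⬝ᵥ diagonal w *ᵥ d) ≤ (c ⬝ᵥ diagonal w *ᵥ d) ^ 2) ↔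
      (Finset.univ.filter fun i => 0 < w i).card = 1 := by
  simp only [Finset.card_eq_one, Finset.eq_singleton_iff_unique_mem, Finset.mem_filter,
    Finset.mem_univ, true_and]
  constructor
  · intro hCS
    obtain ⟨i₀, hi₀⟩ := exists_pos_of_dotProduct_diagonal_mulVec_self_pos hd
    exact ⟨i₀, hi₀, fun i hi => eq_of_pos_of_reverse_cauchySchwarz hd hCS hi hi₀⟩
  · rintro ⟨i₀, -, hw⟩
    exact reverse_cauchySchwarz_of_pos_imp_eq hd hw

theorem IsHermitian.dotProduct_mulVec_eq_diagonal_eigenvalues {B : Matrix ι ι ℝ}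
    (hB : B.IsHermitian) (x z : ι → ℝ) :
    x ⬝ᵥ B *ᵥ z = (star (hB.eigenvectorUnitary : Matrix ι ι ℝ) *ᵥ x) ⬝ᵥ
      diagonal hB.eigenvalues *ᵥ (star (hB.eigenvectorUnitary : Matrix ι ι ℝ) *ᵥ z) := by
  set U : Matrix ι ι ℝ := (hB.eigenvectorUnitary : Matrix ι ι ℝ)
  have hB' : B = U * diagonal hB.eigenvalues * star U := by
    conv_lhs => rw [hB.spectral_theorem]
    simp [U]
  have hU : star U = Uᵀ := conjTranspose_eq_transpose_of_trivial U
  conv_lhs => rw [hB']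
  rw [← mulVec_mulVec, ← mulVec_mulVec, dotProduct_mulVec, hU]
  simp only [mulVec_transpose]

theorem IsHermitian.reverse_cauchySchwarz_iff_card_pos_eigenvalues_eq_one {B : Matrix ι ι ℝ}
    (hB : B.IsHermitian) {u : ι → ℝ} (hu : 0 < u ⬝ᵥ B *ᵥ u) :
    (∀ x, (x ⬝ᵥ B *ᵥ x) * (u ⬝ᵥ B *ᵥ u) ≤ (x ⬝ᵥ B *ᵥ u) ^ 2) ↔
      (Finset.univ.filter fun i => 0 < hB.eigenvalues i).card = 1 := by
  set V := star (hB.eigenvectorUnitary : Matrix ι ι ℝ)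
  have hV : Function.Surjective (V *ᵥ ·) := fun c =>
    ⟨star V *ᵥ c, by simp [V, mulVec_mulVec]⟩
  simp only [hB.dotProduct_mulVec_eq_diagonal_eigenvalues] at hu ⊢
  rw [← reverse_cauchySchwarz_iff_card_pos_eq_one hu]
  refine ⟨fun h c => ?_, fun h x => h _⟩
  obtain ⟨x, rfl⟩ := hV c
  exact h x

end Matrix

theorem quadForm_hyperbolic_iff_one_positive_eigenvalue_general (n : ℕ)
    (B : Matrix (Fin n) (Fin n) ℝ) (hB : B.IsHermitian) :
    ((∀ x : Fin n → ℝ, (∀ i, 0 < x i) → 0 < quadForm B x) ∧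
        ∀ (u x : Fin n → ℝ), (∀ i, 0 < u i) → ((lineQuad B x u).roots.card : ℕ) = 2) ↔
      ((Finset.univ.filter fun i => 0 < hB.eigenvalues i).card = 1 ∧
        ∀ x : Fin n → ℝ, (∀ i, 0 < x i) → 0 < quadForm B x) := by
  constructor
  · rintro ⟨hpos, hroots⟩
    have hpos1 : 0 < quadForm B 1 := hpos 1 fun _ => one_pos
    refine ⟨(hB.reverse_cauchySchwarz_iff_card_pos_eigenvalues_eq_one hpos1).1 fun x => ?_, hpos⟩
    exact (card_roots_lineQuad_eq_two_iff hpos1 x).1 (hroots 1 x fun _ => one_pos)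
  · rintro ⟨hcard, hpos⟩
    refine ⟨hpos, fun u x hu => ?_⟩
    have hu' : 0 < quadForm B u := hpos u hu
    exact (card_roots_lineQuad_eq_two_iff hu' x).2
      ((hB.reverse_cauchySchwarz_iff_card_pos_eigenvalues_eq_one hu').2 hcard x)

/-- For a symmetric nonnegative matrix `B`, the quadratic form `xᵀBx` is a positive
hyperbolic polynomial (positive on the positive orthant and `t ↦ (x+tu)ᵀB(x+tu)` has
2 real roots with multiplicity for all `u > 0`, `x`) if and only if `B` has exactly one
positive eigenvalue (and `xᵀBx` is positive on the positive orthant). -/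
theorem quadForm_hyperbolic_iff_one_positive_eigenvalue (n : ℕ)
    (B : Matrix (Fin n) (Fin n) ℝ) (hB : B.IsHermitian) (hnn : ∀ i j, 0 ≤ B i j) :
    ((∀ x : Fin n → ℝ, (∀ i, 0 < x i) → 0 < quadForm B x) ∧
        ∀ (u x : Fin n → ℝ), (∀ i, 0 < u i) → ((lineQuad B x u).roots.card : ℕ) = 2) ↔
      ((Finset.univ.filter fun i => 0 < hB.eigenvalues i).card = 1 ∧
        ∀ x : Fin n → ℝ, (∀ i, 0 < x i) → 0 < quadForm B x) :=
  quadForm_hyperbolic_iff_one_positive_eigenvalue_general n B hB
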